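/- (Theorem 2, Categorical Parallel Token Prediction.) Let P be an autoregressive model over Fin V, let s be a context, and for u = (u_1, …, u_n) ∈ [0,1)^n let t_1(u), …, t_n(u) denote the tokens of the PTP recursion. Then for every k ∈ {1, …, n}, every token b ∈ Fin V, and every Borel set A ⊆ [0,1)^{k-1}, the Lebesgue measure of {(u_1, …, u_k) ∈ [0,1)^k : (u_1, …, u_{k-1}) ∈ A and t_k(u) = b} equals ∫_A P(b ∣ s ++ [t_1(u), …, t_{k-1}(u)]) d(u_1, …, u_{k-1}). In other words, when the auxiliaries are i.i.d. uniform on [0,1), the conditional distribution of t_k given (u_1, …, u_{k-1}) is exactly the autoregressive conditional P(·∣ s ++ t_{<k}) and does not depend on u_k. -/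
import Mathlib


open MeasureTheory

def IsProbVec {V : ℕ} (p : Fin V → ℝ) : Prop :=
  (∀ j, 0 ≤ p j) ∧ ∑ j, p j = 1

def cdf {V : ℕ} (p : Fin V → ℝ) (j : Fin V) : ℝ :=
  ∑ l ∈ Finset.Iic j, p l

def cdfLt {V : ℕ} (p : Fin V → ℝ) (j : Fin V) : ℝ :=
  ∑ l ∈ Finset.Iio j, p l

open Classical in
noncomputable def pick {V : ℕ} [NeZero V] (p : Fin V → ℝ) (u : ℝ) : Fin V :=
  if h : (Finset.univ.filter fun j => u < cdf p j).Nonempty then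
    (Finset.univ.filter fun j => u < cdf p j).min' h
  else ⟨0, Nat.pos_of_ne_zero (NeZero.ne V)⟩

/-- Tokens generated so far by the PTP recursion: `ptpPrefix P s u k = [t_1, …, t_k]`. -/
noncomputable def ptpPrefix {V : ℕ} [NeZero V] (P : List (Fin V) → Fin V → ℝ)
    (s : List (Fin V)) (u : ℕ → ℝ) : ℕ → List (Fin V)
  | 0 => []
  | k + 1 => ptpPrefix P s u k ++ [pick (P (s ++ ptpPrefix P s u k)) (u k)]

/-- The `(k+1)`-st token of the PTP recursion (0-indexed `k`):
`t_{k+1} = Pick(u_{k+1}, P(·∣ s ++ [t_1, …, t_k]))`. -/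
noncomputable def ptpTok {V : ℕ} [NeZero V] (P : List (Fin V) → Fin V → ℝ)
    (s : List (Fin V)) (u : ℕ → ℝ) (k : ℕ) : Fin V :=
  pick (P (s ++ ptpPrefix P s u k)) (u k)

/-- The PTP map `Φ : [0,1)^n → (Fin V)^n` sending auxiliaries to the generated tokens. -/
noncomputable def ptpMap {V : ℕ} [NeZero V] (P : List (Fin V) → Fin V → ℝ)
    (s : List (Fin V)) {n : ℕ} (u : Fin n → ℝ) (k : Fin n) : Fin V :=
  ptpTok P s (fun i => if h : i < n then u ⟨i, h⟩ else 0) k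

/-- The list `[a_1, …, a_{j-1}]` of tokens strictly before position `j`. -/
def tokPrefix {V m : ℕ} (a : Fin m → Fin V) (j : Fin m) : List (Fin V) :=
  List.ofFn (fun i : Fin j.1 => a (Fin.castLE j.2.le i))

lemma cdfLt_nonneg {V : ℕ} {p : Fin V → ℝ} (hp : ∀ j, 0 ≤ p j) (t : Fin V) :
    0 ≤ cdfLt p t :=
  Finset.sum_nonneg fun l _ => hp l

lemma cdf_le_one {V : ℕ} {p : Fin V → ℝ} (hp : IsProbVec p) (t : Fin V) :
    cdf p t ≤ 1 := by
  rw [← hp.2]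
  exact Finset.sum_le_sum_of_subset_of_nonneg (Finset.subset_univ _)
    (fun l _ _ => hp.1 l)

lemma cdf_sub_cdfLt {V : ℕ} (p : Fin V → ℝ) (t : Fin V) :
    cdf p t - cdfLt p t = p t := by
  have h : Finset.Iic t = insert t (Finset.Iio t) := by
    ext l; simp [Finset.mem_Iic, Finset.mem_Iio, le_iff_lt_or_eq, or_comm]
  rw [cdf, cdfLt, h, Finset.sum_insert (by simp)]
  ring

lemma pick_eq_iff {V : ℕ} [NeZero V] {p : Fin V → ℝ} (hp : IsProbVec p)
    {x : ℝ} (hx0 : 0 ≤ x) (hx1 : x < 1) {t : Fin V} :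
    pick p x = t ↔ cdfLt p t ≤ x ∧ x < cdf p t := by
  classical
  set m : Fin V := ⟨V - 1, by have := NeZero.ne V; omega⟩ with hm
  have hcm : cdf p m = 1 := by
    rw [← hp.2, cdf]
    apply Finset.sum_congr _ (fun _ _ => rfl)
    ext l; simp only [Finset.mem_Iic, Finset.mem_univ, iff_true]
    have := l.isLt; exact Fin.le_def.2 (by simp [hm]; omega)
  have hne : (Finset.univ.filter fun j => x < cdf p j).Nonempty :=
    ⟨m, by simp [hcm, hx1]⟩
  have hpick : pick p x = (Finset.univ.filter fun j => x < cdf p j).min' hne := by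
    rw [pick, dif_pos hne]
  constructor
  · intro h
    subst h
    rw [hpick]
    set F := Finset.univ.filter fun j => x < cdf p j
    have hmem : F.min' hne ∈ F := Finset.min'_mem _ _
    have h2 : x < cdf p (F.min' hne) := by
      simpa [F] using hmem
    refine ⟨?_, h2⟩
    -- cdfLt (min') ≤ x
    rcases Finset.eq_empty_or_nonempty (Finset.Iio (F.min' hne)) with he | hne2
    · rw [cdfLt, he, Finset.sum_empty]; exact hx0
    · set j := (Finset.Iio (F.min' hne)).max' hne2 with hj
      have hjmem : j ∈ Finset.Iio (F.min' hne) := Finset.max'_mem _ _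
      have hjlt : j < F.min' hne := Finset.mem_Iio.1 hjmem
      have hIic : Finset.Iio (F.min' hne) = Finset.Iic j := by
        ext l
        simp only [Finset.mem_Iio, Finset.mem_Iic]
        exact ⟨fun hl => Finset.le_max' _ _ (Finset.mem_Iio.2 hl),
          fun hl => lt_of_le_of_lt hl hjlt⟩
      have hjnot : ¬ x < cdf p j := by
        intro hc
        have : F.min' hne ≤ j := Finset.min'_le _ _ (by simp [F, hc])
        exact absurd hjlt (not_lt.2 this)
      rw [cdfLt, hIic]
      exact not_lt.1 hjnot
  · rintro ⟨h1, h2⟩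
    rw [hpick]
    set F := Finset.univ.filter fun j => x < cdf p j
    have htF : t ∈ F := by simp [F, h2]
    have hle : F.min' hne ≤ t := Finset.min'_le _ _ htF
    rcases eq_or_lt_of_le hle with h | h
    · exact h
    · exfalso
      have hmem : F.min' hne ∈ F := Finset.min'_mem _ _
      have hx : x < cdf p (F.min' hne) := by simpa [F] using hmem
      have : cdf p (F.min' hne) ≤ cdfLt p t := by
        apply Finset.sum_le_sum_of_subset_of_nonneg _ (fun l _ _ => hp.1 l)
        intro l hl
        simp only [Finset.mem_Iic] at hl
        exact Finset.mem_Iio.2 (lt_of_le_of_lt hl h)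
      linarith

lemma measurableSet_pick {V : ℕ} [NeZero V] (p : Fin V → ℝ) (t : Fin V) :
    MeasurableSet {x : ℝ | pick p x = t} := by
  classical
  have heq : {x : ℝ | pick p x = t} =
      ((Set.Iio (cdf p t) ∩ ⋂ (j : Fin V) (_ : j < t), Set.Ici (cdf p j)) ∪
        ((⋂ j : Fin V, Set.Ici (cdf p j)) ∩
          (if t = (⟨0, Nat.pos_of_ne_zero (NeZero.ne V)⟩ : Fin V) then Set.univ else ∅))) := by
    ext x
    simp only [Set.mem_setOf_eq, Set.mem_union, Set.mem_inter_iff, Set.mem_Iio,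
      Set.mem_iInter, Set.mem_Ici]
    constructor
    · intro h
      by_cases hne : (Finset.univ.filter fun j => x < cdf p j).Nonempty
      · left
        rw [pick, dif_pos hne] at h
        subst h
        set F := Finset.univ.filter fun j => x < cdf p j
        have hmem : F.min' hne ∈ F := Finset.min'_mem _ _
        refine ⟨by simpa [F] using hmem, fun j hj => ?_⟩
        by_contra hc
        push_neg at hc
        have : F.min' hne ≤ j := Finset.min'_le _ _ (by simp [F, hc])
        exact absurd hj (not_lt.2 this)
      · right
        rw [pick, dif_neg hne] at h
        refine ⟨fun j => ?_, by simp [← h]⟩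
        by_contra hc
        push_neg at hc
        exact hne ⟨j, by simp [hc]⟩
    · rintro (⟨h1, h2⟩ | ⟨h1, h2⟩)
      · have hne : (Finset.univ.filter fun j => x < cdf p j).Nonempty :=
          ⟨t, by simp [h1]⟩
        rw [pick, dif_pos hne]
        set F := Finset.univ.filter fun j => x < cdf p j
        have hle : F.min' hne ≤ t := Finset.min'_le _ _ (by simp [F, h1])
        rcases eq_or_lt_of_le hle with h | h
        · exact h
        · exfalso
          have hmem : F.min' hne ∈ F := Finset.min'_mem _ _
          have hx : x < cdf p (F.min' hne) := by simpa [F] using hmem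
          exact absurd hx (not_lt.2 (h2 _ h))
      · split_ifs at h2 with ht
        · have hne : ¬ (Finset.univ.filter fun j => x < cdf p j).Nonempty := by
            rintro ⟨j, hj⟩
            simp only [Finset.mem_filter] at hj
            exact absurd hj.2 (not_lt.2 (h1 j))
          rw [pick, dif_neg hne, ht]
        · exact absurd h2 (Set.notMem_empty x)
  rw [heq]
  apply MeasurableSet.union
  · exact (measurableSet_Iio.inter (MeasurableSet.iInter fun j =>
      MeasurableSet.iInter fun _ => measurableSet_Ici))
  · exact (MeasurableSet.iInter fun j => measurableSet_Ici).inter (by split_ifs <;> simp)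

lemma ptpPrefix_congr {V : ℕ} [NeZero V] (P : List (Fin V) → Fin V → ℝ)
    (s : List (Fin V)) {u w : ℕ → ℝ} (m : ℕ) (h : ∀ i < m, u i = w i) :
    ptpPrefix P s u m = ptpPrefix P s w m := by
  induction m with
  | zero => rfl
  | succ m ih =>
    have h1 := ih (fun i hi => h i (Nat.lt_succ_of_lt hi))
    simp [ptpPrefix, h1, h m (Nat.lt_succ_self m)]

lemma ptpPrefix_eq_ofFn {V : ℕ} [NeZero V] (P : List (Fin V) → Fin V → ℝ)
    (s : List (Fin V)) (u : ℕ → ℝ) (m : ℕ) :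
    ptpPrefix P s u m = List.ofFn (fun i : Fin m => ptpTok P s u i) := by
  induction m with
  | zero => simp [ptpPrefix]
  | succ m ih =>
    rw [List.ofFn_succ', List.concat_eq_append]
    simp only [Fin.coe_castSucc, Fin.val_last]
    rw [← ih]
    rfl

lemma measurableSet_ptpPrefix {V : ℕ} [NeZero V] (P : List (Fin V) → Fin V → ℝ)
    (s : List (Fin V)) (n : ℕ) (m : ℕ) (c : List (Fin V)) :
    MeasurableSet {u : Fin n → ℝ |
      ptpPrefix P s (fun i => if h : i < n then u ⟨i, h⟩ else 0) m = c} := by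
  induction m generalizing c with
  | zero =>
    by_cases hc : c = []
    · subst hc; simp only [ptpPrefix]; exact MeasurableSet.univ.congr (by ext u; simp [ptpPrefix])
    · convert MeasurableSet.empty
      ext u
      simp only [Set.mem_setOf_eq, ptpPrefix, Set.mem_empty_iff_false, iff_false]
      exact fun h => hc h.symm
  | succ m ih =>
    have heq : {u : Fin n → ℝ |
        ptpPrefix P s (fun i => if h : i < n then u ⟨i, h⟩ else 0) (m + 1) = c} =
        ⋃ (l : List (Fin V)) (t : Fin V) (_ : l ++ [t] = c),
          ({u : Fin n → ℝ | ptpPrefix P s (fun i => if h : i < n then u ⟨i, h⟩ else 0) m = l} ∩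
           {u : Fin n → ℝ | pick (P (s ++ l)) (if h : m < n then u ⟨m, h⟩ else 0) = t}) := by
      ext u
      simp only [Set.mem_setOf_eq, Set.mem_iUnion, Set.mem_inter_iff]
      constructor
      · intro h
        exact ⟨_, _, h, rfl, rfl⟩
      · rintro ⟨l, t, hlt, h1, h2⟩
        simp only [ptpPrefix, h1, h2, hlt]
    rw [heq]
    apply MeasurableSet.iUnion; intro l
    apply MeasurableSet.iUnion; intro t
    apply MeasurableSet.iUnion; intro _
    apply (ih l).inter
    by_cases hm : m < n
    · simp only [dif_pos hm]
      have : MeasurableSet ((fun u : Fin n → ℝ => u ⟨m, hm⟩) ⁻¹' {x | pick (P (s ++ l)) x = t}) :=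
        measurable_pi_apply _ (measurableSet_pick _ t)
      exact this
    · simp only [dif_neg hm]
      by_cases hp : pick (P (s ++ l)) 0 = t
      · simp [hp]
      · simp [hp]

lemma measurable_ptpMap {V : ℕ} [NeZero V] (P : List (Fin V) → Fin V → ℝ)
    (s : List (Fin V)) (n : ℕ) :
    Measurable (fun u : Fin n → ℝ => ptpMap P s u) := by
  apply measurable_pi_lambda
  intro j
  apply measurable_to_countable'
  intro t
  have heq : (fun u : Fin n → ℝ => ptpMap P s u j) ⁻¹' {t} =
      ⋃ (l : List (Fin V)),
        ({u : Fin n → ℝ | ptpPrefix P s (fun i => if h : i < n then u ⟨i, h⟩ else 0) j.1 = l} ∩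
         {u : Fin n → ℝ | pick (P (s ++ l)) (if h : j.1 < n then u ⟨j.1, h⟩ else 0) = t}) := by
    ext u
    simp only [Set.mem_preimage, Set.mem_singleton_iff, Set.mem_iUnion, Set.mem_inter_iff,
      Set.mem_setOf_eq, ptpMap, ptpTok]
    constructor
    · intro h; exact ⟨_, rfl, h⟩
    · rintro ⟨l, h1, h2⟩; rw [h1]; exact h2
  rw [heq]
  apply MeasurableSet.iUnion; intro l
  apply (measurableSet_ptpPrefix P s n j.1 l).inter
  by_cases hm : j.1 < n
  · simp only [dif_pos hm]
    have : MeasurableSet ((fun u : Fin n → ℝ => u ⟨j.1, hm⟩) ⁻¹' {x | pick (P (s ++ l)) x = t}) :=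
      measurable_pi_apply _ (measurableSet_pick _ t)
    exact this
  · simp only [dif_neg hm]
    by_cases hp : pick (P (s ++ l)) 0 = t
    · simp [hp]
    · simp [hp]

lemma ptpMap_last {V : ℕ} [NeZero V] (P : List (Fin V) → Fin V → ℝ)
    (s : List (Fin V)) {k : ℕ} (u : Fin (k + 1) → ℝ) :
    ptpMap P s u (Fin.last k) =
      pick (P (s ++ List.ofFn (ptpMap P s (fun i : Fin k => u i.castSucc))))
        (u (Fin.last k)) := by
  have hpre : ptpPrefix P s (fun i => if h : i < k + 1 then u ⟨i, h⟩ else 0) k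
      = List.ofFn (ptpMap P s (fun i : Fin k => u i.castSucc)) := by
    rw [ptpPrefix_congr P s
      (w := fun i => if h : i < k then (fun j : Fin k => u j.castSucc) ⟨i, h⟩ else 0) k ?_]
    · rw [ptpPrefix_eq_ofFn]; rfl
    · intro i hi
      simp only [hi, Nat.lt_succ_of_lt hi, dif_pos]
      congr 1
  simp only [ptpMap, ptpTok, Fin.val_last]
  rw [hpre]
  congr 1
  rw [dif_pos (Nat.lt_succ_self k)]
  rfl


/-- **Theorem 2 (Categorical Parallel Token Prediction).** With `k` past auxiliaries and one
current auxiliary (indices `0, …, k` below, so the current token is the `(k+1)`-st), for every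
token `b` and every Borel set `A ⊆ [0,1)^k` of past auxiliaries, the Lebesgue measure of
`{(u_1, …, u_{k+1}) ∈ [0,1)^{k+1} : (u_1, …, u_k) ∈ A ∧ t_{k+1}(u) = b}` equals
`∫_A P(b ∣ s ++ [t_1(v), …, t_k(v)]) dv`: when the auxiliaries are i.i.d. uniform on `[0,1)`,
the conditional distribution of the current token given the past auxiliaries is exactly the
autoregressive conditional `P(·∣ s ++ t_{<k})`, and it does not depend on the token's own
auxiliary. -/
theorem categorical_ptp {V : ℕ} [NeZero V]
    (P : List (Fin V) → Fin V → ℝ) (hP : ∀ s, IsProbVec (P s))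
    (s : List (Fin V)) (k : ℕ) (b : Fin V)
    (A : Set (Fin k → ℝ)) (hA : MeasurableSet A)
    (hA01 : A ⊆ {v | ∀ i, v i ∈ Set.Ico (0 : ℝ) 1}) :
    volume {u : Fin (k + 1) → ℝ |
        (∀ i, u i ∈ Set.Ico (0 : ℝ) 1) ∧
        (fun i : Fin k => u i.castSucc) ∈ A ∧
        ptpMap P s u (Fin.last k) = b} =
      ∫⁻ v in A, ENNReal.ofReal (P (s ++ List.ofFn (ptpMap P s v)) b) := by
  classical
  set g : (Fin k → ℝ) → ℝ := fun v => cdfLt (P (s ++ List.ofFn (ptpMap P s v))) b with hg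
  set h : (Fin k → ℝ) → ℝ := fun v => cdf (P (s ++ List.ofFn (ptpMap P s v))) b with hh
  have hmg : Measurable g :=
    (measurable_of_countable fun a : Fin k → Fin V =>
      cdfLt (P (s ++ List.ofFn a)) b).comp (measurable_ptpMap P s k)
  have hmh : Measurable h :=
    (measurable_of_countable fun a : Fin k → Fin V =>
      cdf (P (s ++ List.ofFn a)) b).comp (measurable_ptpMap P s k)
  set S' : Set (ℝ × (Fin k → ℝ)) := {q | q.2 ∈ A ∧ g q.2 ≤ q.1 ∧ q.1 < h q.2} with hS'
  have hS'meas : MeasurableSet S' := by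
    refine (measurable_snd hA).inter ?_
    exact (measurableSet_le (hmg.comp measurable_snd) measurable_fst).inter
      (measurableSet_lt measurable_fst (hmh.comp measurable_snd))
  have key : {u : Fin (k + 1) → ℝ |
        (∀ i, u i ∈ Set.Ico (0 : ℝ) 1) ∧
        (fun i : Fin k => u i.castSucc) ∈ A ∧
        ptpMap P s u (Fin.last k) = b} =
      (MeasurableEquiv.piFinSuccAbove (fun _ : Fin (k + 1) => ℝ) (Fin.last k)) ⁻¹' S' := by
    ext u
    have happ : (MeasurableEquiv.piFinSuccAbove (fun _ : Fin (k + 1) => ℝ) (Fin.last k)) u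
        = (u (Fin.last k), fun j : Fin k => u j.castSucc) := by
      simp only [MeasurableEquiv.piFinSuccAbove, MeasurableEquiv.coe_mk,
        Equiv.symm_symm_apply, Fin.insertNthEquiv, Equiv.coe_fn_symm_mk,
        Fin.removeNth_last]
      rfl
    simp only [Set.mem_preimage, happ, hS', Set.mem_setOf_eq]
    set v : Fin k → ℝ := fun j : Fin k => u j.castSucc with hv
    have hq : IsProbVec (P (s ++ List.ofFn (ptpMap P s v))) := hP _
    constructor
    · rintro ⟨h01, hvA, hb⟩
      have hx := h01 (Fin.last k)
      have hb' : pick (P (s ++ List.ofFn (ptpMap P s v))) (u (Fin.last k)) = b := by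
        rw [← ptpMap_last]; exact hb
      have := (pick_eq_iff hq hx.1 hx.2).1 hb'
      exact ⟨hvA, this.1, this.2⟩
    · rintro ⟨hvA, h1, h2⟩
      have hx0 : (0 : ℝ) ≤ u (Fin.last k) := le_trans (cdfLt_nonneg hq.1 b) h1
      have hx1 : u (Fin.last k) < 1 := lt_of_lt_of_le h2 (cdf_le_one hq b)
      refine ⟨?_, hvA, ?_⟩
      · intro i
        induction i using Fin.lastCases with
        | last => exact ⟨hx0, hx1⟩
        | cast j => exact hA01 hvA j
      · rw [ptpMap_last]
        exact (pick_eq_iff hq hx0 hx1).2 ⟨h1, h2⟩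
  rw [key]
  have hmp := measurePreserving_piFinSuccAbove (fun _ : Fin (k + 1) => (volume : Measure ℝ))
    (Fin.last k)
  rw [show (volume : Measure (Fin (k + 1) → ℝ)) = Measure.pi fun _ => volume from volume_pi]
  rw [hmp.measure_preimage hS'meas.nullMeasurableSet]
  rw [show (Measure.pi fun _ : Fin k => (volume : Measure ℝ)) = volume from volume_pi.symm]
  rw [Measure.prod_apply_symm hS'meas]
  have hsec : ∀ v : Fin k → ℝ, (volume ((fun x => (x, v)) ⁻¹' S')) =
      A.indicator (fun v => ENNReal.ofReal (P (s ++ List.ofFn (ptpMap P s v)) b)) v := by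
    intro v
    by_cases hvA : v ∈ A
    · have : (fun x => (x, v)) ⁻¹' S' = Set.Ico (g v) (h v) := by
        ext x
        simp [hS', hvA, Set.mem_Ico]
      rw [this, Real.volume_Ico, Set.indicator_of_mem hvA]
      congr 1
      rw [hh, hg]
      exact cdf_sub_cdfLt _ _
    · have : (fun x => (x, v)) ⁻¹' S' = ∅ := by
        ext x; simp [hS', hvA]
      rw [this, Set.indicator_of_notMem hvA]
      simp
  simp_rw [hsec]
  rw [lintegral_indicator hA]
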